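/- arXiv:1809.10945 — 2 statements merged into one kernel-verified Lean document; each statement's English description precedes it below -/
import Mathlib

section
/- Let K be an abstract simplicial complex and suppose the vertex v is dominated by the vertex v' ≠ v. Let r be the vertex map with r(v) = v' and r(w) = w for w ≠ v. Then the composition of r with the inclusion of K \ v into K is contiguous to the identity map of K: for every simplex σ ∈ K, the finset σ ∪ r(σ) is a simplex of K. In particular, for every σ ∈ K with v ∈ σ, σ ∪ {v'} ∈ K. -/
/-- `K` is an abstract simplicial complex: every member is nonempty and every
nonempty subset of a member belongs to `K`. -/
def IsComplex {V : Type*} (K : Set (Finset V)) : Prop :=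
  (∀ σ ∈ K, σ.Nonempty) ∧ ∀ σ ∈ K, ∀ τ : Finset V, τ ⊆ σ → τ.Nonempty → τ ∈ K

/-- The link of the vertex `v` in `K`. -/
def link {V : Type*} [DecidableEq V] (K : Set (Finset V)) (v : V) : Set (Finset V) :=
  {τ | τ ∈ K ∧ v ∉ τ ∧ τ ∪ {v} ∈ K}

/-- `v` is dominated by the vertex `v' ≠ v`: the link of `v` is a cone with apex `v'`. -/
def Dominated {V : Type*} [DecidableEq V] (K : Set (Finset V)) (v v' : V) : Prop :=
  v' ≠ v ∧ ({v'} : Finset V) ∈ link K v ∧ ∀ τ ∈ link K v, τ ∪ {v'} ∈ link K v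

section

variable {V : Type*} [DecidableEq V] {K : Set (Finset V)} {v v' : V}

theorem IsComplex.erase_mem_link (hK : IsComplex K) {σ : Finset V} (hσ : σ ∈ K) (hv : v ∈ σ)
    (hne : (σ.erase v).Nonempty) : σ.erase v ∈ link K v := by
  refine ⟨hK.2 σ hσ _ (σ.erase_subset v) hne, σ.notMem_erase v, ?_⟩
  rwa [Finset.union_singleton, Finset.insert_erase hv]

/-- The cone condition applied to `σ.erase v`, or to `{v'}` when `σ = {v}`. -/
theorem Dominated.union_singleton_mem (hK : IsComplex K) (hdom : Dominated K v v')
    {σ : Finset V} (hσ : σ ∈ K) (hv : v ∈ σ) : σ ∪ {v'} ∈ K := by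
  obtain ⟨-, ⟨-, -, hv'v⟩, hcone⟩ := hdom
  rcases (σ.erase v).eq_empty_or_nonempty with hempty | hne
  · obtain rfl : σ = {v} := by
      rw [← Finset.insert_erase hv, hempty, insert_empty_eq]
    rwa [Finset.union_comm]
  · have hmem := (hcone _ (hK.erase_mem_link hσ hv hne)).2.2
    rwa [Finset.union_right_comm, Finset.union_singleton v, Finset.insert_erase hv] at hmem

theorem Finset.image_ite_eq_subset (σ : Finset V) (v v' : V) :
    σ.image (fun w => if w = v then v' else w) ⊆ σ ∪ {v'} := by
  intro x hx
  obtain ⟨w, hw, rfl⟩ := Finset.mem_image.mp hx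
  split_ifs
  · exact Finset.mem_union_right _ (Finset.mem_singleton_self v')
  · exact Finset.mem_union_left _ hw

theorem Finset.image_ite_eq_of_notMem {σ : Finset V} (hv : v ∉ σ) (v' : V) :
    σ.image (fun w => if w = v then v' else w) = σ := by
  rw [Finset.image_congr (g := id), Finset.image_id]
  intro w hw
  exact if_neg (ne_of_mem_of_not_mem hw hv)

end

/-- If `v` is dominated by `v'` and `r` is the retraction sending `v` to `v'` and fixing
the other vertices, then (the inclusion composed with) `r` is contiguous to the identity
of `K`: for every `σ ∈ K` the finset `σ ∪ r(σ)` is a simplex of `K`.  In particular, for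
every `σ ∈ K` containing `v`, `σ ∪ {v'} ∈ K`. -/
theorem retraction_contiguous_id {V : Type*} [DecidableEq V] (K : Set (Finset V))
    (hK : IsComplex K) (v v' : V) (hdom : Dominated K v v') :
    (∀ σ ∈ K, σ ∪ σ.image (fun w => if w = v then v' else w) ∈ K) ∧
    (∀ σ ∈ K, v ∈ σ → σ ∪ {v'} ∈ K) := by
  refine ⟨fun σ hσ => ?_, fun σ hσ hv => hdom.union_singleton_mem hK hσ hv⟩
  by_cases hv : v ∈ σ
  · refine hK.2 _ (hdom.union_singleton_mem hK hσ hv) _ ?_ ⟨v, Finset.mem_union_left _ hv⟩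
    exact Finset.union_subset Finset.subset_union_left (σ.image_ite_eq_subset v v')
  · rwa [Finset.image_ite_eq_of_notMem hv, Finset.union_self]
end

section
/- For every finite abstract simplicial complex K there exists a full subcomplex L of K such that K strong collapses to L and L is isomorphic to N²(K). -/
/-- `v` is a vertex of `K`. -/
def IsVertex {V : Type*} (K : Set (Finset V)) (v : V) : Prop := {v} ∈ K

/-- `σ` is a maximal simplex of `K`. -/
def IsMaximalSimplex {V : Type*} (K : Set (Finset V)) (σ : Finset V) : Prop :=
  σ ∈ K ∧ ∀ τ ∈ K, σ ⊆ τ → σ = τ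

/-- The deletion `K \ v` of the vertex `v` from `K`. -/
def deletion {V : Type*} (K : Set (Finset V)) (v : V) : Set (Finset V) :=
  {σ | σ ∈ K ∧ v ∉ σ}

/-- `K` strong collapses to `L`: `L` is obtained from `K` by a finite (possibly empty)
sequence of elementary strong collapses, i.e. deletions of dominated vertices. -/
inductive StrongCollapses {V : Type*} [DecidableEq V] :
    Set (Finset V) → Set (Finset V) → Prop
  | refl (K : Set (Finset V)) : StrongCollapses K K
  | step (K L : Set (Finset V)) (v v' : V) (hdom : Dominated K v v')
      (h : StrongCollapses (deletion K v) L) : StrongCollapses K L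

/-- The nerve of `K`: all nonempty finite sets of maximal simplices of `K`
with nonempty common intersection. -/
def nerve {V : Type*} (K : Set (Finset V)) : Set (Finset (Finset V)) :=
  {S | S.Nonempty ∧ (∀ σ ∈ S, IsMaximalSimplex K σ) ∧ ∃ x : V, ∀ σ ∈ S, x ∈ σ}

/-- `K` and `L` are isomorphic simplicial complexes: some vertex bijection `φ`
identifies the simplices of `K` with those of `L`. -/
def Isomorphic {V W : Type*} [DecidableEq W]
    (K : Set (Finset V)) (L : Set (Finset W)) : Prop :=
  ∃ φ : V → W, Set.BijOn φ {v | IsVertex K v} {w | IsVertex L w} ∧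
    ∀ σ : Finset V, (∀ v ∈ σ, IsVertex K v) → (σ ∈ K ↔ σ.image φ ∈ L)

/-!
For each maximal simplex `S` of `N(K)` pick a vertex `x_S` in the intersection of its members; then
`S` is the set of maximal simplices of `K` containing `x_S`, its *maximal star*. Every vertex `u` of `K`
is dominated by such a representative: the maximal star of `u` lies in some maximal `S`, so `x_S`
belongs to every maximal simplex containing `u`. Deleting the non-representatives one at a time is
therefore a strong collapse onto the full subcomplex `L` spanned by the representatives, and
`v ↦ (maximal star of v)` identifies `L` with `N²(K)`, whose vertices are the maximal simplices of
`N(K)`.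
-/

section

variable {V : Type*} {K : Set (Finset V)}

lemma IsComplex.isVertex_of_mem (hK : IsComplex K) {σ : Finset V} (hσ : σ ∈ K) {v : V}
    (hv : v ∈ σ) : IsVertex K v :=
  hK.2 σ hσ {v} (Finset.singleton_subset_iff.2 hv) (Finset.singleton_nonempty v)

lemma IsComplex.deletion (hK : IsComplex K) (v : V) : IsComplex (deletion K v) :=
  ⟨fun σ hσ => hK.1 σ hσ.1, fun σ hσ τ hτσ hτ => ⟨hK.2 σ hσ.1 τ hτσ hτ, fun hv => hσ.2 (hτσ hv)⟩⟩

lemma finite_setOf_isVertex (hfin : K.Finite) : {v | IsVertex K v}.Finite :=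
  show ((fun v => ({v} : Finset V)) ⁻¹' K).Finite from
    hfin.preimage Finset.singleton_injective.injOn

lemma exists_isMaximalSimplex_superset (hfin : K.Finite) {σ : Finset V} (hσ : σ ∈ K) :
    ∃ τ, IsMaximalSimplex K τ ∧ σ ⊆ τ := by
  obtain ⟨τ, hστ, hτ, hmax⟩ := hfin.exists_le_maximal hσ
  exact ⟨τ, ⟨hτ, fun ρ hρ hτρ => le_antisymm hτρ (hmax hρ hτρ)⟩, hστ⟩

lemma nerve_finite (hfin : K.Finite) : (nerve K).Finite :=
  hfin.toFinset.powerset.finite_toSet.subset fun _ hS =>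
    Finset.mem_powerset.2 fun σ hσ => hfin.mem_toFinset.2 (hS.2.1 σ hσ).1

lemma dominated_of_forall_union_mem [DecidableEq V] (hK : IsComplex K) {u w : V}
    (hu : IsVertex K u) (hwu : w ≠ u) (h : ∀ σ ∈ K, u ∈ σ → σ ∪ {w} ∈ K) : Dominated K u w := by
  have huw : {u} ∪ {w} ∈ K := h _ hu (Finset.mem_singleton_self u)
  refine ⟨hwu, ⟨hK.2 _ huw _ Finset.subset_union_right (Finset.singleton_nonempty w),
    by simpa using hwu.symm, by rwa [Finset.union_comm]⟩, ?_⟩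
  rintro τ ⟨-, huτ, hτu⟩
  have hτuw : τ ∪ {u} ∪ {w} ∈ K := h _ hτu (by simp)
  exact ⟨hK.2 _ hτuw _ (Finset.union_subset_union_left Finset.subset_union_left) (by simp),
    by simp [huτ, hwu.symm], by rwa [Finset.union_right_comm]⟩

def inducedSubcomplex (K : Set (Finset V)) (W : Set V) : Set (Finset V) :=
  {σ | σ ∈ K ∧ ↑σ ⊆ W}

lemma isVertex_inducedSubcomplex {W : Set V} {v : V} :
    IsVertex (inducedSubcomplex K W) v ↔ IsVertex K v ∧ v ∈ W := by
  simp [IsVertex, inducedSubcomplex]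

lemma inducedSubcomplex_deletion {W : Set V} {a : V} (ha : a ∉ W) :
    inducedSubcomplex (deletion K a) W = inducedSubcomplex K W := by
  ext σ
  exact ⟨fun h => ⟨h.1.1, h.2⟩, fun h => ⟨⟨h.1, fun haσ => ha (h.2 haσ)⟩, h.2⟩⟩

lemma inducedSubcomplex_eq_self (hK : IsComplex K) {W : Set V}
    (hW : ∀ v, IsVertex K v → v ∈ W) : inducedSubcomplex K W = K :=
  Set.ext fun _ => ⟨fun h => h.1, fun h => ⟨h, fun _ hv => hW _ (hK.isVertex_of_mem h hv)⟩⟩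

/-- The hypothesis says that each vertex outside `W` is dominated by a vertex of `W`; it survives
the deletion of a vertex outside `W`, which lets the induction go through. -/
theorem strongCollapses_inducedSubcomplex [DecidableEq V] (hK : IsComplex K)
    (hfin : {v | IsVertex K v}.Finite) {W : Set V}
    (hW : ∀ u, IsVertex K u → ∃ w ∈ W, ∀ σ ∈ K, u ∈ σ → σ ∪ {w} ∈ K) :
    StrongCollapses K (inducedSubcomplex K W) := by
  obtain ⟨s, hs⟩ : ∃ s : Finset V, ∀ v, IsVertex K v → v ∉ W → v ∈ s :=
    ⟨hfin.toFinset, fun v hv _ => hfin.mem_toFinset.2 hv⟩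
  clear hfin
  induction s using Finset.induction_on generalizing K with
  | empty =>
    rw [inducedSubcomplex_eq_self hK fun v hv => by_contra fun hvW => by simpa using hs v hv hvW]
    exact .refl K
  | insert a s _ ih =>
    by_cases ha : IsVertex K a ∧ a ∉ W
    · obtain ⟨w, hwW, hw⟩ := hW a ha.1
      have hwa : w ≠ a := fun h => ha.2 (h ▸ hwW)
      refine .step K _ a w (dominated_of_forall_union_mem hK ha.1 hwa hw) ?_
      rw [← inducedSubcomplex_deletion ha.2]
      refine ih (hK.deletion a) (fun u hu => ?_) fun v hv hvW => ?_
      · obtain ⟨w', hw'W, hw'⟩ := hW u hu.1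
        have hw'a : w' ≠ a := fun h => ha.2 (h ▸ hw'W)
        exact ⟨w', hw'W, fun σ hσ huσ => ⟨hw' σ hσ.1 huσ, by simp [hσ.2, hw'a.symm]⟩⟩
      · have hva : v ≠ a := fun h => hv.2 (by simp [h])
        exact (Finset.mem_insert.1 (hs v hv.1 hvW)).resolve_left hva
    · refine ih hK hW fun v hv hvW => (Finset.mem_insert.1 (hs v hv hvW)).resolve_left ?_
      rintro rfl
      exact ha ⟨hv, hvW⟩

noncomputable def maximalStar (K : Set (Finset V)) (hfin : K.Finite) (v : V) : Finset (Finset V) :=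
  (hfin.subset fun σ (hσ : IsMaximalSimplex K σ ∧ v ∈ σ) => hσ.1.1).toFinset

@[simp]
lemma mem_maximalStar {hfin : K.Finite} {v : V} {σ : Finset V} :
    σ ∈ maximalStar K hfin v ↔ IsMaximalSimplex K σ ∧ v ∈ σ :=
  Set.Finite.mem_toFinset _

lemma maximalStar_mem_nerve (hfin : K.Finite) {u : V} (hu : IsVertex K u) :
    maximalStar K hfin u ∈ nerve K := by
  obtain ⟨τ, hτ, huτ⟩ := exists_isMaximalSimplex_superset hfin hu
  exact ⟨⟨τ, mem_maximalStar.2 ⟨hτ, huτ (Finset.mem_singleton_self u)⟩⟩,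
    fun σ hσ => (mem_maximalStar.1 hσ).1, u, fun σ hσ => (mem_maximalStar.1 hσ).2⟩

lemma maximalStar_eq_of_isMaximalSimplex_nerve (hfin : K.Finite) {S : Finset (Finset V)}
    (hS : IsMaximalSimplex (nerve K) S) {x : V} (hx : ∀ σ ∈ S, x ∈ σ) :
    maximalStar K hfin x = S := by
  obtain ⟨hSne, hSmax, -⟩ := hS.1
  have hSx : S ⊆ maximalStar K hfin x := fun σ hσ => mem_maximalStar.2 ⟨hSmax σ hσ, hx σ hσ⟩
  exact (hS.2 _ ⟨hSne.mono hSx, fun σ hσ => (mem_maximalStar.1 hσ).1, x,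
    fun σ hσ => (mem_maximalStar.1 hσ).2⟩ hSx).symm

lemma image_maximalStar_eq (hfin : K.Finite) :
    maximalStar K hfin '' {x | IsMaximalSimplex (nerve K) (maximalStar K hfin x)} =
      {S | IsMaximalSimplex (nerve K) S} := by
  refine Set.Subset.antisymm (Set.image_subset_iff.2 fun _ hx => hx) fun S hS => ?_
  obtain ⟨x, hx⟩ := hS.1.2.2
  have hxS := maximalStar_eq_of_isMaximalSimplex_nerve hfin hS hx
  exact ⟨x, show IsMaximalSimplex _ _ by rwa [hxS], hxS⟩

lemma exists_forall_union_mem [DecidableEq V] (hK : IsComplex K) (hfin : K.Finite) {W : Set V}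
    (hW : Set.SurjOn (maximalStar K hfin) W {S | IsMaximalSimplex (nerve K) S})
    {u : V} (hu : IsVertex K u) : ∃ w ∈ W, ∀ σ ∈ K, u ∈ σ → σ ∪ {w} ∈ K := by
  obtain ⟨S, hS, huS⟩ :=
    exists_isMaximalSimplex_superset (nerve_finite hfin) (maximalStar_mem_nerve hfin hu)
  obtain ⟨w, hwW, rfl⟩ := hW hS
  refine ⟨w, hwW, fun σ hσ huσ => ?_⟩
  obtain ⟨τ, hτ, hστ⟩ := exists_isMaximalSimplex_superset hfin hσ
  have hwτ : w ∈ τ := (mem_maximalStar.1 (huS (mem_maximalStar.2 ⟨hτ, hστ huσ⟩))).2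
  exact hK.2 τ hτ.1 _ (Finset.union_subset hστ (Finset.singleton_subset_iff.2 hwτ)) (by simp)

lemma isVertex_nerve_iff {U : Type*} {L : Set (Finset U)} {S : Finset U} :
    IsVertex (nerve L) S ↔ IsMaximalSimplex L S ∧ S.Nonempty := by
  simp [IsVertex, nerve, Finset.Nonempty]

lemma image_maximalStar_mem_nerve_nerve_iff [DecidableEq V] (hK : IsComplex K) (hfin : K.Finite)
    {σ : Finset V} (hσ : ∀ v ∈ σ, IsMaximalSimplex (nerve K) (maximalStar K hfin v)) :
    σ.image (maximalStar K hfin) ∈ nerve (nerve K) ↔ σ ∈ K := by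
  constructor
  · rintro ⟨hne, -, τ, hτ⟩
    have hτσ : ∀ v ∈ σ, IsMaximalSimplex K τ ∧ v ∈ τ := fun v hv =>
      mem_maximalStar.1 (hτ _ (Finset.mem_image_of_mem _ hv))
    obtain ⟨v, hv⟩ := Finset.image_nonempty.1 hne
    exact hK.2 τ (hτσ v hv).1.1 σ (fun v hv => (hτσ v hv).2) ⟨v, hv⟩
  · intro hσK
    obtain ⟨τ, hτ, hστ⟩ := exists_isMaximalSimplex_superset hfin hσK
    refine ⟨(hK.1 σ hσK).image _, ?_, τ, ?_⟩ <;>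
      simp only [Finset.forall_mem_image]
    · exact hσ
    · exact fun v hv => mem_maximalStar.2 ⟨hτ, hστ hv⟩

theorem isomorphic_inducedSubcomplex_nerve_nerve [DecidableEq V] (hK : IsComplex K)
    (hfin : K.Finite) {W : Set V}
    (hW : Set.BijOn (maximalStar K hfin) W {S | IsMaximalSimplex (nerve K) S}) :
    Isomorphic (inducedSubcomplex K W) (nerve (nerve K)) := by
  have hWvert : ∀ v ∈ W, IsVertex K v := fun v hv => by
    obtain ⟨σ, hσ⟩ := (hW.mapsTo hv).1.1
    exact hK.isVertex_of_mem (mem_maximalStar.1 hσ).1.1 (mem_maximalStar.1 hσ).2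
  have hvert : {v | IsVertex (inducedSubcomplex K W) v} = W :=
    Set.ext fun v => isVertex_inducedSubcomplex.trans ⟨And.right, fun hv => ⟨hWvert v hv, hv⟩⟩
  have hvert' : {S | IsVertex (nerve (nerve K)) S} = {S | IsMaximalSimplex (nerve K) S} :=
    Set.ext fun S => isVertex_nerve_iff.trans ⟨And.left, fun hS => ⟨hS, hS.1.1⟩⟩
  refine ⟨maximalStar K hfin, by rwa [hvert, hvert'], fun σ hσ => ?_⟩
  have hσW : ∀ v ∈ σ, v ∈ W := fun v hv => (isVertex_inducedSubcomplex.1 (hσ v hv)).2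
  rw [image_maximalStar_mem_nerve_nerve_iff hK hfin fun v hv => hW.mapsTo (hσW v hv)]
  exact ⟨And.left, fun hσK => ⟨hσK, hσW⟩⟩

end

/-- Every finite simplicial complex `K` strong collapses to a full subcomplex `L`
isomorphic to `N²(K)`. -/
theorem strongCollapse_to_nerve_sq {V : Type*} [DecidableEq V]
    (K : Set (Finset V)) (hK : IsComplex K) (hfin : K.Finite) :
    ∃ L : Set (Finset V), L ⊆ K ∧
      (∀ σ ∈ K, (∀ v ∈ σ, IsVertex L v) → σ ∈ L) ∧
      StrongCollapses K L ∧ Isomorphic L (nerve (nerve K)) := by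
  obtain ⟨W, -, hW⟩ := Set.exists_subset_bijOn
    {x | IsMaximalSimplex (nerve K) (maximalStar K hfin x)} (maximalStar K hfin)
  rw [image_maximalStar_eq] at hW
  refine ⟨inducedSubcomplex K W, fun σ hσ => hσ.1, fun σ hσ hσW => ?_, ?_,
    isomorphic_inducedSubcomplex_nerve_nerve hK hfin hW⟩
  · exact ⟨hσ, fun v hv => (isVertex_inducedSubcomplex.1 (hσW v hv)).2⟩
  · exact strongCollapses_inducedSubcomplex hK (finite_setOf_isVertex hfin)
      fun u hu => exists_forall_union_mem hK hfin hW.surjOn hu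
end
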